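/- arXiv:1908.07106 — 5 statements merged into one kernel-verified Lean document; each statement's English description precedes it below -/
import Mathlib

section
/- For every n ≥ 3, the permutation σ_n is a product of n−1 disjoint cycles of length n and one cycle of length n−1, fixing the single point (n−1,n−1); that is, the cycle type of σ_n is the multiset consisting of n−1 copies of n together with one copy of n−1. In particular, sign(σ_n) = (−1)^{(n−1)² + (n−2)}. -/
set_option linter.unusedSectionVars false

namespace PuzzleAux

variable (n : ℕ) [NeZero n]

lemma cast_inj_of_lt {a b : ℕ} (ha : a < n) (hb : b < n) (h : (a : ZMod n) = (b : ZMod n)) :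
    a = b := by
  have := congrArg ZMod.val h
  rwa [ZMod.val_cast_of_lt ha, ZMod.val_cast_of_lt hb] at this

variable (hn : 3 ≤ n)

section facts
include hn

lemma hL0 : ((n - 1 : ℕ) : ZMod n) ≠ 0 := by
  intro h
  have : (n - 1 : ℕ) = 0 := by
    have h0 : ((0:ℕ) : ZMod n) = 0 := by simp
    exact cast_inj_of_lt n (by omega) (by omega) (by rw [h, h0])
  omega

lemma hML : ((n - 2 : ℕ) : ZMod n) ≠ ((n - 1 : ℕ) : ZMod n) := by
  intro h
  have := cast_inj_of_lt n (a := n-2) (b := n-1) (by omega) (by omega) h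
  omega

lemma hM0 : ((n - 2 : ℕ) : ZMod n) ≠ 0 := by
  intro h
  have : (n - 2 : ℕ) = 0 := by
    have h0 : ((0:ℕ) : ZMod n) = 0 := by simp
    exact cast_inj_of_lt n (by omega) (by omega) (by rw [h, h0])
  omega

lemma hL1 : ((n - 1 : ℕ) : ZMod n) + 1 = 0 := by
  have : ((n - 1 : ℕ) : ZMod n) + ((1:ℕ) : ZMod n) = ((n : ℕ) : ZMod n) := by
    rw [← Nat.cast_add]; congr 1; omega
  simpa using this

lemma hM1 : ((n - 2 : ℕ) : ZMod n) + 1 = ((n - 1 : ℕ) : ZMod n) := by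
  have : ((n - 2 : ℕ) : ZMod n) + ((1:ℕ) : ZMod n) = ((n - 1 : ℕ) : ZMod n) := by
    rw [← Nat.cast_add]; congr 1; omega
  simpa using this

lemma sub_ne_L {c : ZMod n} (hc0 : c ≠ 0) : c - 1 ≠ ((n - 1 : ℕ) : ZMod n) := by
  intro h
  apply hc0
  have : c = ((n - 1 : ℕ) : ZMod n) + 1 := by rw [← h]; ring
  rw [this, hL1 n hn]

lemma sub_ne_M {c : ZMod n} (hcL : c ≠ ((n - 1 : ℕ) : ZMod n)) :
    c - 1 ≠ ((n - 2 : ℕ) : ZMod n) := by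
  intro h
  apply hcL
  have : c = ((n - 2 : ℕ) : ZMod n) + 1 := by rw [← h]; ring
  rw [this, hM1 n hn]

lemma one_ne_zero' : (1 : ZMod n) ≠ 0 := by
  haveI : Fact (1 < n) := ⟨by omega⟩
  exact one_ne_zero

end facts

/-- The `(n-1)`-cycle on `ZMod n \ {n-1}`. -/
def g : Equiv.Perm (ZMod n) where
  toFun c := if c = ((n - 1 : ℕ) : ZMod n) then c
    else if c = 0 then ((n - 2 : ℕ) : ZMod n) else c - 1
  invFun c := if c = ((n - 1 : ℕ) : ZMod n) then c
    else if c = ((n - 2 : ℕ) : ZMod n) then 0 else c + 1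
  left_inv c := by
    rcases eq_or_ne c ((n - 1 : ℕ) : ZMod n) with hc | hc
    · simp [hc]
    · rcases eq_or_ne c 0 with h0 | h0
      · subst h0
        simp [Ne.symm (hL0 n hn), hML n hn]
      · simp only [if_neg hc, if_neg h0, if_neg (sub_ne_L n hn h0),
          if_neg (sub_ne_M n hn hc)]
        ring
  right_inv c := by
    rcases eq_or_ne c ((n - 1 : ℕ) : ZMod n) with hc | hc
    · simp [hc]
    · rcases eq_or_ne c ((n - 2 : ℕ) : ZMod n) with h0 | h0
      · subst h0
        simp [Ne.symm (hL0 n hn), hML n hn]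
      · have h1 : c + 1 ≠ ((n - 1 : ℕ) : ZMod n) := by
          intro h; apply h0
          have : c = ((n - 1 : ℕ) : ZMod n) - 1 := by rw [← h]; ring
          rw [this, ← hM1 n hn]; ring
        have h2 : c + 1 ≠ 0 := by
          intro h; apply hc
          have : c = -1 := by linear_combination h
          rw [this]
          exact (eq_neg_of_add_eq_zero_left (hL1 n hn)).symm
        simp only [if_neg hc, if_neg h0, if_neg h1, if_neg h2]
        ring

lemma g_apply_ne {c : ZMod n} (hcL : c ≠ ((n - 1 : ℕ) : ZMod n)) (hc0 : c ≠ 0) :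
    g n hn c = c - 1 := by
  simp [g, hcL, hc0]

lemma g_apply_L : g n hn ((n - 1 : ℕ) : ZMod n) = ((n - 1 : ℕ) : ZMod n) := by simp [g]

lemma g_apply_zero : g n hn 0 = ((n - 2 : ℕ) : ZMod n) := by
  simp [g, Ne.symm (hL0 n hn)]

lemma g_ne_self {c : ZMod n} (hcL : c ≠ ((n - 1 : ℕ) : ZMod n)) : g n hn c ≠ c := by
  rcases eq_or_ne c 0 with h0 | h0
  · rw [h0, g_apply_zero n hn]; exact hM0 n hn
  · rw [g_apply_ne n hn hcL h0]
    intro h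
    exact one_ne_zero' n hn (by linear_combination -h)


/-- Column shift on all rows except row `n-1`. -/
def pAlpha : Equiv.Perm (ZMod n × ZMod n) :=
  Equiv.prodShear (Equiv.refl _)
    (fun r => if r = ((n - 1 : ℕ) : ZMod n) then Equiv.refl _ else Equiv.subRight 1)

/-- The `(n-1)`-cycle acting on row `n-1`. -/
def pBeta : Equiv.Perm (ZMod n × ZMod n) :=
  Equiv.prodShear (Equiv.refl _)
    (fun r => if r = ((n - 1 : ℕ) : ZMod n) then g n hn else Equiv.refl _)

lemma pAlpha_apply_ne {r : ZMod n} (c : ZMod n) (hr : r ≠ ((n - 1 : ℕ) : ZMod n)) :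
    pAlpha n (r, c) = (r, c - 1) := by
  simp [pAlpha, Equiv.prodShear, hr]

lemma pAlpha_apply_L (c : ZMod n) :
    pAlpha n (((n - 1 : ℕ) : ZMod n), c) = (((n - 1 : ℕ) : ZMod n), c) := by
  simp [pAlpha, Equiv.prodShear]

lemma pBeta_apply_ne {r : ZMod n} (c : ZMod n) (hr : r ≠ ((n - 1 : ℕ) : ZMod n)) :
    pBeta n hn (r, c) = (r, c) := by
  simp [pBeta, Equiv.prodShear, hr]

lemma pBeta_apply_L (c : ZMod n) :
    pBeta n hn (((n - 1 : ℕ) : ZMod n), c) = (((n - 1 : ℕ) : ZMod n), g n hn c) := by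
  simp [pBeta, Equiv.prodShear]

lemma pAlpha_pow (k : ℕ) {r : ZMod n} (c : ZMod n) (hr : r ≠ ((n - 1 : ℕ) : ZMod n)) :
    (pAlpha n ^ k) (r, c) = (r, c - (k : ZMod n)) := by
  induction k generalizing c with
  | zero => simp
  | succ k ih =>
      rw [pow_succ, Equiv.Perm.mul_apply, pAlpha_apply_ne n c hr, ih (c - 1)]
      push_cast
      ring_nf

lemma pBeta_pow (k : ℕ) (hk : k ≤ n - 2) :
    (pBeta n hn ^ k) (((n - 1 : ℕ) : ZMod n), ((n - 2 : ℕ) : ZMod n)) =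
      (((n - 1 : ℕ) : ZMod n), ((n - 2 - k : ℕ) : ZMod n)) := by
  induction k with
  | zero => simp
  | succ k ih =>
      have hk' : k ≤ n - 2 := by omega
      rw [pow_succ', Equiv.Perm.mul_apply, ih hk', pBeta_apply_L]
      have hm1 : (1 : ℕ) ≤ n - 2 - k := by omega
      have hmL : ((n - 2 - k : ℕ) : ZMod n) ≠ ((n - 1 : ℕ) : ZMod n) := fun h => by
        have := cast_inj_of_lt n (a := n - 2 - k) (b := n - 1) (by omega) (by omega) h
        omega
      have hm0 : ((n - 2 - k : ℕ) : ZMod n) ≠ 0 := fun h => by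
        have h0 : ((0:ℕ) : ZMod n) = 0 := by simp
        have := cast_inj_of_lt n (a := n - 2 - k) (b := 0) (by omega) (by omega) (by rw [h, h0])
        omega
      rw [g_apply_ne n hn hmL hm0]
      congr 1
      have : ((n - 2 - (k+1) : ℕ) : ZMod n) + ((1:ℕ) : ZMod n) = ((n - 2 - k : ℕ) : ZMod n) := by
        rw [← Nat.cast_add]; congr 1; omega
      simp only [Nat.cast_one] at this
      linear_combination -this

lemma alpha_sameCycle {a y : ZMod n × ZMod n} (ha : a.1 ≠ ((n - 1 : ℕ) : ZMod n)) :
    (pAlpha n).SameCycle a y ↔ y.1 = a.1 := by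
  constructor
  · intro h
    obtain ⟨i, _, hi⟩ := h.exists_pow_eq'
    rw [show a = (a.1, a.2) from rfl, pAlpha_pow n i a.2 ha] at hi
    rw [← hi]
  · intro h
    refine ⟨((a.2 - y.2).val : ℕ), ?_⟩
    rw [zpow_natCast, show a = (a.1, a.2) from rfl, pAlpha_pow n _ a.2 ha,
      ZMod.natCast_rightInverse (a.2 - y.2)]
    rw [show y = (y.1, y.2) from rfl, h]
    congr 1
    ring

include hn in
lemma alpha_support :
    (pAlpha n).support = ({((n - 1 : ℕ) : ZMod n)}ᶜ : Finset (ZMod n)) ×ˢ Finset.univ := by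
  ext ⟨r, c⟩
  simp only [Equiv.Perm.mem_support, Finset.mem_product, Finset.mem_compl,
    Finset.mem_singleton, Finset.mem_univ, and_true]
  constructor
  · intro h hr
    exact h (by rw [hr, pAlpha_apply_L])
  · intro hr h
    rw [pAlpha_apply_ne n c hr, Prod.mk.injEq] at h
    exact one_ne_zero' n hn (by linear_combination -h.2)

lemma beta_support :
    (pBeta n hn).support =
      ({((n - 1 : ℕ) : ZMod n)} : Finset (ZMod n)) ×ˢ ({((n - 1 : ℕ) : ZMod n)}ᶜ : Finset (ZMod n)) := by
  ext ⟨r, c⟩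
  simp only [Equiv.Perm.mem_support, Finset.mem_product, Finset.mem_compl,
    Finset.mem_singleton]
  constructor
  · intro h
    rcases eq_or_ne r ((n - 1 : ℕ) : ZMod n) with hr | hr
    · refine ⟨hr, fun hc => ?_⟩
      apply h
      rw [hr, hc, pBeta_apply_L, g_apply_L]
    · exact absurd (pBeta_apply_ne n hn c hr) h
  · rintro ⟨hr, hc⟩
    subst hr
    rw [pBeta_apply_L, Ne, Prod.mk.injEq]
    rintro ⟨-, h2⟩
    exact g_ne_self n hn hc h2

lemma beta_isCycle : (pBeta n hn).IsCycle := by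
  refine ⟨(((n - 1 : ℕ) : ZMod n), ((n - 2 : ℕ) : ZMod n)), ?_, ?_⟩
  · rw [pBeta_apply_L, Ne, Prod.mk.injEq]
    rintro ⟨-, h2⟩
    exact g_ne_self n hn (hML n hn) h2
  · intro y hy
    obtain ⟨y1, y2⟩ := y
    have hy' : (y1, y2) ∈ (pBeta n hn).support := Equiv.Perm.mem_support.2 hy
    rw [beta_support n hn] at hy'
    simp only [Finset.mem_product, Finset.mem_singleton, Finset.mem_compl] at hy'
    obtain ⟨h1, h2⟩ := hy'
    have hval : y2.val ≤ n - 2 := by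
      have hlt := ZMod.val_lt y2
      rcases Nat.lt_or_ge y2.val (n - 1) with h | h
      · omega
      · exfalso
        apply h2
        have : y2.val = n - 1 := by omega
        rw [← ZMod.natCast_rightInverse y2, this]
    refine ⟨((n - 2 - y2.val : ℕ) : ℤ), ?_⟩
    rw [zpow_natCast, pBeta_pow n hn _ (by omega)]
    have : n - 2 - (n - 2 - y2.val) = y2.val := by omega
    rw [this, ZMod.natCast_rightInverse y2, h1]

include hn in
lemma beta_cycleType : (pBeta n hn).cycleType = {n - 1} := by
  have hcard : (pBeta n hn).support.card = n - 1 := by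
    rw [beta_support n hn, Finset.card_product, Finset.card_singleton, Finset.card_compl,
      Finset.card_singleton, ZMod.card, one_mul]
  rw [(beta_isCycle n hn).cycleType, hcard]

include hn in
lemma alpha_cycleOf_support {a : ZMod n × ZMod n} (ha : a.1 ≠ ((n - 1 : ℕ) : ZMod n)) :
    ((pAlpha n).cycleOf a).support = ({a.1} : Finset (ZMod n)) ×ˢ Finset.univ := by
  have hmem : a ∈ (pAlpha n).support := by
    rw [alpha_support n hn]
    simp [ha]
  ext y
  rw [Equiv.Perm.mem_support_cycleOf_iff]
  simp only [alpha_sameCycle n ha, hmem, and_true, Finset.mem_product, Finset.mem_singleton,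
    Finset.mem_univ]

include hn in
lemma alpha_cycleType : (pAlpha n).cycleType = Multiset.replicate (n - 1) n := by
  have hmem : ∀ k ∈ (pAlpha n).cycleType, k = n := by
    intro k hk
    rw [Equiv.Perm.cycleType_def, Multiset.mem_map] at hk
    obtain ⟨c, hc, rfl⟩ := hk
    have hc' : c ∈ (pAlpha n).cycleFactorsFinset := Finset.mem_val.mp hc
    obtain ⟨a, ha1, -⟩ := (Equiv.Perm.mem_cycleFactorsFinset_iff.mp hc').1
    have haC : a ∈ c.support := Equiv.Perm.mem_support.2 ha1
    have hceq : c = (pAlpha n).cycleOf a := Equiv.Perm.cycle_is_cycleOf haC hc'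
    have haS : a ∈ (pAlpha n).support := by
      have h2 := (Equiv.Perm.mem_cycleFactorsFinset_iff.mp hc').2 a haC
      exact Equiv.Perm.mem_support.2 (by rw [← h2]; exact ha1)
    have haL : a.1 ≠ ((n - 1 : ℕ) : ZMod n) := by
      rw [alpha_support n hn] at haS
      simpa using (Finset.mem_product.mp haS).1
    simp only [Function.comp_apply]
    rw [hceq, alpha_cycleOf_support n hn haL, Finset.card_product, Finset.card_singleton,
      Finset.card_univ, ZMod.card, one_mul]
  have hrep := Multiset.eq_replicate_of_mem hmem
  have hsum := Equiv.Perm.sum_cycleType (pAlpha n)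
  rw [alpha_support n hn, Finset.card_product, Finset.card_compl, Finset.card_singleton,
    Finset.card_univ, ZMod.card] at hsum
  rw [hrep] at hsum ⊢
  rw [Multiset.sum_replicate, smul_eq_mul] at hsum
  congr 1
  exact Nat.eq_of_mul_eq_mul_right (by omega) hsum

end PuzzleAux

open PuzzleAux


/-- **Cycle structure of one move of the empty square, from its own perspective.**
For `n ≥ 3`, let `σ` be the permutation of `(ℤ/nℤ)²` defined by: `σ(r,c) = (r, c−1)` for
every row `r ≠ n−1`; `σ(n−1,n−1) = (n−1,n−1)`; `σ(n−1,0) = (n−1,n−2)`; and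
`σ(n−1,c) = (n−1,c−1)` for `c ∉ {0, n−1}`.  Then `σ` is a product of `n−1` disjoint cycles
of length `n` and one cycle of length `n−1` (so its cycle type is `n−1` copies of `n`
together with one copy of `n−1`), and `sign σ = (−1)^{(n−1)² + (n−2)}`. -/
theorem puzzle_generator_cycleType (n : ℕ) [NeZero n] (hn : 3 ≤ n)
    (σ : Equiv.Perm (ZMod n × ZMod n))
    (hrow : ∀ r c : ZMod n, r ≠ ((n - 1 : ℕ) : ZMod n) → σ (r, c) = (r, c - 1))
    (hfix : σ (((n - 1 : ℕ) : ZMod n), ((n - 1 : ℕ) : ZMod n)) =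
      (((n - 1 : ℕ) : ZMod n), ((n - 1 : ℕ) : ZMod n)))
    (hzero : σ (((n - 1 : ℕ) : ZMod n), 0) = (((n - 1 : ℕ) : ZMod n), ((n - 2 : ℕ) : ZMod n)))
    (hlast : ∀ c : ZMod n, c ≠ 0 → c ≠ ((n - 1 : ℕ) : ZMod n) →
      σ (((n - 1 : ℕ) : ZMod n), c) = (((n - 1 : ℕ) : ZMod n), c - 1)) :
    σ.cycleType = Multiset.replicate (n - 1) n + {n - 1} ∧
    Equiv.Perm.sign σ = (-1) ^ ((n - 1) ^ 2 + (n - 2)) := by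
  have hσ : σ = pAlpha n * pBeta n hn := by
    refine Equiv.ext ?_
    rintro ⟨r, c⟩
    rw [Equiv.Perm.mul_apply]
    rcases eq_or_ne r ((n - 1 : ℕ) : ZMod n) with hr | hr
    · subst hr
      rw [pBeta_apply_L]
      rcases eq_or_ne c ((n - 1 : ℕ) : ZMod n) with hc | hc
      · rw [hc, g_apply_L, pAlpha_apply_L, hfix]
      · rcases eq_or_ne c 0 with h0 | h0
        · rw [h0, g_apply_zero, pAlpha_apply_L, hzero]
        · rw [g_apply_ne n hn hc h0, pAlpha_apply_L, hlast c h0 hc]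
    · rw [pBeta_apply_ne n hn c hr, pAlpha_apply_ne n c hr, hrow r c hr]
  have hdisj : (pAlpha n).Disjoint (pBeta n hn) := by
    rintro ⟨r, c⟩
    rcases eq_or_ne r ((n - 1 : ℕ) : ZMod n) with h | h
    · left; rw [h, pAlpha_apply_L]
    · right; exact pBeta_apply_ne n hn c h
  have hct : σ.cycleType = Multiset.replicate (n - 1) n + {n - 1} := by
    rw [hσ, Equiv.Perm.Disjoint.cycleType_mul hdisj, alpha_cycleType n hn, beta_cycleType n hn]
  refine ⟨hct, ?_⟩
  rw [Equiv.Perm.sign_of_cycleType, hct]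
  obtain ⟨k, rfl⟩ : ∃ k, n = k + 3 := ⟨n - 3, by omega⟩
  have h1 : k + 3 - 1 = k + 2 := by omega
  have h2 : k + 3 - 2 = k + 1 := by omega
  rw [h1, h2]
  simp only [Multiset.sum_add, Multiset.card_add, Multiset.sum_replicate,
    Multiset.card_replicate, Multiset.sum_singleton, Multiset.card_singleton, smul_eq_mul]
  have hexp : (k + 2) * (k + 3) + (k + 2) + ((k + 2) + 1) = ((k + 2) ^ 2 + (k + 1)) + 2 * (k + 3) := by
    ring
  rw [hexp, pow_add, pow_mul, neg_one_sq, one_pow, mul_one]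
end

section
/- There is a constant c > 0 such that for every integer N ≥ 1 and every real x with |x| ≤ 1/(2N), the Dirichlet kernel satisfies |D_N(x)| ≤ 1 − c·N²·x². -/
open Real Finset

/-- The Dirichlet kernel `D_N(x) = 1/(2N+1) · (1 + 2 Σ_{j=1}^N cos(2πjx))`. -/
noncomputable def dirichletKer (N : ℕ) (x : ℝ) : ℝ :=
  (1 / (2 * (N : ℝ) + 1)) * (1 + 2 * ∑ j ∈ Finset.Icc 1 N, Real.cos (2 * Real.pi * j * x))

lemma sum_sq_Icc (N : ℕ) :
    (∑ j ∈ Finset.Icc 1 N, (j : ℝ) ^ 2) * 6 = N * (N + 1) * (2 * N + 1) := by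
  induction N with
  | zero => simp
  | succ n ih =>
    rw [Finset.sum_Icc_succ_top (by omega)]
    push_cast
    push_cast at ih
    ring_nf
    ring_nf at ih
    linarith

lemma sin_mul_dirichlet (x : ℝ) (N : ℕ) :
    Real.sin (Real.pi * x) *
      (1 + 2 * ∑ j ∈ Finset.Icc 1 N, Real.cos (2 * Real.pi * j * x)) =
    Real.sin ((2 * N + 1) * (Real.pi * x)) := by
  have h2 : ∀ a b : ℝ, Real.sin (b + a) - Real.sin (b - a) = 2 * Real.sin a * Real.cos b := by
    intro a b; rw [Real.sin_add, Real.sin_sub]; ring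
  induction N with
  | zero => simp
  | succ n ih =>
    rw [Finset.sum_Icc_succ_top (by omega)]
    have hb := h2 (Real.pi * x) (2 * ((n : ℝ) + 1) * (Real.pi * x))
    push_cast
    push_cast at ih
    have e1 : 2 * ((n : ℝ) + 1) * (Real.pi * x) + Real.pi * x
        = (2 * ((n : ℝ) + 1) + 1) * (Real.pi * x) := by ring
    have e2 : 2 * ((n : ℝ) + 1) * (Real.pi * x) - Real.pi * x
        = (2 * (n : ℝ) + 1) * (Real.pi * x) := by ring
    have e3 : 2 * Real.pi * ((n : ℝ) + 1) * x = 2 * ((n : ℝ) + 1) * (Real.pi * x) := by ring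
    rw [e1, e2] at hb
    rw [e3]
    nlinarith [hb, ih]

set_option maxHeartbeats 1000000 in
lemma key (N : ℕ) (hN : 1 ≤ N) (x : ℝ) (hx0 : 0 ≤ x) (hx : x ≤ 1 / (2 * (N : ℝ))) :
    |dirichletKer N x| ≤ 1 - (1/2) * (N : ℝ) ^ 2 * x ^ 2 := by
  have hNpos : (0 : ℝ) < N := by exact_mod_cast Nat.pos_of_ne_zero (by omega)
  have hN1 : (1 : ℝ) ≤ N := by exact_mod_cast hN
  have hNx : (N : ℝ) * x ≤ 1 / 2 := by
    have h : (N : ℝ) * (1 / (2 * N)) = 1 / 2 := by field_simp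
    calc (N : ℝ) * x ≤ (N : ℝ) * (1 / (2 * N)) := by
          exact mul_le_mul_of_nonneg_left hx (le_of_lt hNpos)
      _ = 1 / 2 := h
  have hden : (0 : ℝ) < 2 * (N : ℝ) + 1 := by linarith
  set S := ∑ j ∈ Finset.Icc 1 N, Real.cos (2 * Real.pi * j * x) with hS
  have hDdef : dirichletKer N x = (1 + 2 * S) / (2 * (N : ℝ) + 1) := by
    rw [dirichletKer]; ring
  have hpi : 0 < Real.pi := Real.pi_pos
  -- per-term bounds
  have hterm : ∀ j ∈ Finset.Icc 1 N,
      (1 : ℝ) - 2 * Real.pi ^ 2 * x ^ 2 * (j : ℝ) ^ 2 ≤ Real.cos (2 * Real.pi * j * x) ∧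
      Real.cos (2 * Real.pi * j * x) ≤ 1 - 8 * x ^ 2 * (j : ℝ) ^ 2 := by
    intro j hj
    simp only [Finset.mem_Icc] at hj
    have hj1 : (1 : ℝ) ≤ j := by exact_mod_cast hj.1
    have hjN : (j : ℝ) ≤ N := by exact_mod_cast hj.2
    have hjx : (j : ℝ) * x ≤ 1 / 2 := le_trans (by nlinarith) hNx
    have hjx0 : 0 ≤ (j : ℝ) * x := by positivity
    have hu0 : 0 ≤ Real.pi * j * x := by positivity
    have hu2 : Real.pi * j * x ≤ Real.pi / 2 := by nlinarith
    constructor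
    · have := Real.one_sub_sq_div_two_le_cos (x := 2 * Real.pi * j * x)
      nlinarith
    · have hsin := Real.mul_le_sin hu0 hu2
      have h1 : 2 / Real.pi * (Real.pi * j * x) = 2 * (j * x) := by field_simp
      rw [h1] at hsin
      have hsq : (2 * ((j : ℝ) * x)) ^ 2 ≤ Real.sin (Real.pi * j * x) ^ 2 :=
        pow_le_pow_left₀ (by positivity) hsin 2
      have hcos : Real.cos (2 * Real.pi * j * x) = 1 - 2 * Real.sin (Real.pi * j * x) ^ 2 := by
        have e : 2 * Real.pi * (j : ℝ) * x = 2 * (Real.pi * j * x) := by ring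
        rw [e, Real.cos_two_mul, Real.sin_sq]; ring
      rw [hcos]; nlinarith
  have hsum : (∑ j ∈ Finset.Icc 1 N, (j : ℝ) ^ 2) * 6 = N * (N + 1) * (2 * N + 1) :=
    sum_sq_Icc N
  have hsum_lo : (N : ℝ) - 2 * Real.pi ^ 2 * x ^ 2 * (∑ j ∈ Finset.Icc 1 N, (j : ℝ) ^ 2) ≤ S := by
    have h := Finset.sum_le_sum (fun j hj => (hterm j hj).1)
    rw [Finset.sum_sub_distrib, Finset.sum_const, ← Finset.mul_sum] at h
    simpa using h
  have hsum_hi : S ≤ (N : ℝ) - 8 * x ^ 2 * (∑ j ∈ Finset.Icc 1 N, (j : ℝ) ^ 2) := by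
    have h := Finset.sum_le_sum (fun j hj => (hterm j hj).2)
    rw [Finset.sum_sub_distrib, Finset.sum_const, ← Finset.mul_sum] at h
    simpa using h
  -- bounds on D
  have hx2 : (N : ℝ) ^ 2 * x ^ 2 ≤ 1 / 4 := by nlinarith [mul_nonneg hNpos.le hx0, hNx]
  have hDhi : dirichletKer N x ≤ 1 - (1/2) * (N : ℝ) ^ 2 * x ^ 2 := by
    rw [hDdef, div_le_iff₀ hden]
    have hT : (∑ j ∈ Finset.Icc 1 N, (j : ℝ) ^ 2) = N * (N + 1) * (2 * N + 1) / 6 := by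
      linarith [hsum]
    rw [hT] at hsum_hi
    nlinarith [hsum_hi, mul_nonneg (sq_nonneg x) (by positivity : (0:ℝ) ≤ (N:ℝ)),
      mul_nonneg (sq_nonneg x) (by positivity : (0:ℝ) ≤ (N:ℝ)^2),
      mul_nonneg (sq_nonneg x) (by positivity : (0:ℝ) ≤ (N:ℝ)^3)]
  have hDlo : 1 - (4 * Real.pi ^ 2 / 3) * (N : ℝ) ^ 2 * x ^ 2 ≤ dirichletKer N x := by
    rw [hDdef, le_div_iff₀ hden]
    have hT : (∑ j ∈ Finset.Icc 1 N, (j : ℝ) ^ 2) = N * (N + 1) * (2 * N + 1) / 6 := by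
      linarith [hsum]
    rw [hT] at hsum_lo
    have hA : 0 ≤ Real.pi ^ 2 * x ^ 2 * ((N:ℝ)^2 * ((N:ℝ) - 1)) := by
      apply mul_nonneg (by positivity)
      apply mul_nonneg (by positivity); linarith
    have hB : 0 ≤ Real.pi ^ 2 * x ^ 2 * ((N:ℝ) * ((N:ℝ) - 1)) := by
      apply mul_nonneg (by positivity)
      apply mul_nonneg (by positivity); linarith
    nlinarith [hsum_lo, hA, hB]
  rw [abs_le]
  refine ⟨?_, hDhi⟩
  by_cases hcase : (N : ℝ) ^ 2 * x ^ 2 ≤ 1 / 7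
  · have hpi2 : Real.pi ^ 2 ≤ 9.87 := by nlinarith [Real.pi_lt_d4, Real.pi_pos]
    have hu : 0 ≤ (9.87 - Real.pi ^ 2) * ((N:ℝ)^2 * x^2) := by
      apply mul_nonneg (by linarith) (by positivity)
    nlinarith [hDlo, hu, hcase]
  · -- closed form regime
    push_neg at hcase
    have hxpos : 0 < x := by
      rcases lt_or_eq_of_le hx0 with h | h
      · exact h
      · exfalso; rw [← h] at hcase; simp at hcase; linarith
    have hsinpos : 2 * x ≤ Real.sin (Real.pi * x) := by
      have := Real.mul_le_sin (x := Real.pi * x) (by positivity) (by nlinarith)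
      have h1 : 2 / Real.pi * (Real.pi * x) = 2 * x := by field_simp
      linarith [h1 ▸ this]
    have hid := sin_mul_dirichlet x N
    rw [← hS] at hid
    have habs : |1 + 2 * S| * (2 * x) ≤ 1 := by
      have h1 : |Real.sin (Real.pi * x)| * |1 + 2 * S| = |Real.sin ((2*N+1) * (Real.pi * x))| := by
        rw [← abs_mul, hid]
      have h2 : |Real.sin ((2*N+1) * (Real.pi * x))| ≤ 1 := Real.abs_sin_le_one _
      have h3 : (2 * x) * |1 + 2 * S| ≤ |Real.sin (Real.pi * x)| * |1 + 2 * S| := by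
        apply mul_le_mul_of_nonneg_right _ (abs_nonneg _)
        calc 2 * x ≤ Real.sin (Real.pi * x) := hsinpos
          _ ≤ |Real.sin (Real.pi * x)| := le_abs_self _
      nlinarith [abs_nonneg (1 + 2 * S)]
    have hD : |dirichletKer N x| ≤ 7 / 8 := by
      have h4 : 8 / 7 ≤ 4 * ((N : ℝ) * x) := by nlinarith [mul_pos hNpos hxpos]
      have h5 : |dirichletKer N x| = |1 + 2 * S| / (2 * (N : ℝ) + 1) := by
        rw [hDdef, abs_div, abs_of_pos hden]
      rw [h5, div_le_iff₀ hden]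
      nlinarith [abs_nonneg (1 + 2 * S), mul_pos hNpos hxpos]
    nlinarith [(abs_le.mp hD).1, hx2]

lemma dirichletKer_neg (N : ℕ) (x : ℝ) : dirichletKer N (-x) = dirichletKer N x := by
  unfold dirichletKer
  congr 1
  congr 1
  congr 1
  apply Finset.sum_congr rfl
  intro j _
  rw [show 2 * Real.pi * (j:ℝ) * -x = -(2 * Real.pi * j * x) by ring, Real.cos_neg]

/-- There is a constant `c > 0` such that for every integer `N ≥ 1` and every real `x`
with `|x| ≤ 1/(2N)`, the Dirichlet kernel satisfies `|D_N(x)| ≤ 1 − c N² x²`. -/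
theorem dirichlet_kernel_small_freq_bound :
    ∃ c : ℝ, 0 < c ∧ ∀ N : ℕ, 1 ≤ N → ∀ x : ℝ, |x| ≤ 1 / (2 * (N : ℝ)) →
      |dirichletKer N x| ≤ 1 - c * (N : ℝ) ^ 2 * x ^ 2 := by
  refine ⟨1/2, by norm_num, fun N hN x hx => ?_⟩
  rcases le_or_gt 0 x with h | h
  · rw [abs_of_nonneg h] at hx
    exact key N hN x h hx
  · rw [abs_of_neg h] at hx
    have := key N hN (-x) (by linarith) hx
    rw [dirichletKer_neg] at this
    simpa using this
end

section
/- For every n ≥ 3, 5/4 ≤ e_{(1,0)}ᵀ (I − P'_n)^{-1} e_{(1,0)} < 5, where e_{(1,0)} is the standard basis vector at index (1,0) ∈ (ℤ/nℤ)² ∖ {(0,0)}. -/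
/-- Transition matrix of `1/5`-lazy simple random walk on `(ℤ/nℤ)²`:
`P(x,y) = (1/5)·#{d ∈ {(0,0),(1,0),(−1,0),(0,1),(0,−1)} : y = x + d}`. -/
noncomputable def lazySRW (n : ℕ) : Matrix (ZMod n × ZMod n) (ZMod n × ZMod n) ℝ :=
  fun x y => (1 / 5 : ℝ) *
    ((({((0 : ZMod n), (0 : ZMod n)), (1, 0), (-1, 0), (0, 1), (0, -1)} :
        Finset (ZMod n × ZMod n)).filter (fun d => y = x + d)).card : ℝ)

/-- The submatrix `P'ₙ` of `lazySRW n` obtained by deleting the row and column of `(0,0)`. -/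
noncomputable def lazySRW' (n : ℕ) :
    Matrix {x : ZMod n × ZMod n // x ≠ 0} {x : ZMod n × ZMod n // x ≠ 0} ℝ :=
  fun x y => lazySRW n x.1 y.1

/-- `e_xᵀ (I − P'ₙ)⁻¹ e_y`, the `(x,y)` entry of the resolvent `(I − P'ₙ)⁻¹`
(with value `0` in the degenerate cases `x = 0` or `y = 0`). -/
noncomputable def resolventEntry (n : ℕ) [NeZero n] (x y : ZMod n × ZMod n) : ℝ :=
  if hx : x ≠ 0 then
    if hy : y ≠ 0 then ((1 - lazySRW' n)⁻¹) ⟨x, hx⟩ ⟨y, hy⟩ else 0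
  else 0

/-! Write `A = I - P'ₙ`, `x = (1, 0)`, `γ = (A⁻¹)ₓₓ`, and let `G` be the column `A⁻¹ eₓ` extended by
`0` at the origin. For `v` vanishing at the origin, `vᵀ A v` is a tenth of the Dirichlet energy
`∑_y ∑_d (v y - v (y + d))²` of the lazy walk, which vanishes only on constants; so `A` is positive
definite.

Lower bound: Cauchy–Schwarz for `⟨u, w⟩ = uᵀ A w` gives `1 = ⟨eₓ, A⁻¹ eₓ⟩² ≤ Aₓₓ γ = 4γ/5`.

Upper bound: the energy of `G` is `10 (A⁻¹ eₓ)ᵀ A (A⁻¹ eₓ) = 10γ`. Keeping only the four edges of the unit square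
`0, (1,0), (1,1), (0,1)`, each seen from both endpoints, and using `G 0 = 0`, `G x = γ`, the energy
is at least `2 (γ² + γ²/3)`: the increments along the path `0 → (0,1) → (1,1) → (1,0)` add up
to `γ`. Hence `γ ≤ 15/4`. -/

open Finset Function

namespace Matrix

variable {ι R : Type*} [Fintype ι]

theorem dotProduct_submatrix_mulVec {m : Type*} [Fintype m] [CommSemiring R] (M : Matrix ι ι R)
    {f : m → ι} (hf : Injective f) (x : m → R) :
    x ⬝ᵥ M.submatrix f f *ᵥ x = extend f x 0 ⬝ᵥ M *ᵥ extend f x 0 := by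
  have hsum (g : ι → R) : ∑ k, x k * g (f k) = ∑ j, extend f x 0 j * g j :=
    Fintype.sum_of_injective f hf _ _
      (fun j hj => by simp [extend_apply' _ _ _ (by simpa using hj)])
      (fun k => by rw [hf.extend_apply])
  have hmulVec (k : m) : (M.submatrix f f *ᵥ x) k = (M *ᵥ extend f x 0) (f k) := by
    simpa only [mulVec, dotProduct, submatrix_apply, mul_comm (M _ _)] using hsum (M (f k))
  simp only [dotProduct, hmulVec]
  exact hsum _

theorem dotProduct_mulVec_inv_mulVec_single [DecidableEq ι] [CommRing R] {M : Matrix ι ι R}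
    (hM : IsUnit M) (i : ι) :
    (M⁻¹ *ᵥ Pi.single i 1) ⬝ᵥ M *ᵥ (M⁻¹ *ᵥ Pi.single i 1) = M⁻¹ i i := by
  rw [mulVec_mulVec, mul_nonsing_inv _ ((isUnit_iff_isUnit_det M).mp hM), one_mulVec,
    dotProduct_single, mul_one, mulVec_single_one, col_apply]

variable [Field R] [LinearOrder R] [IsStrictOrderedRing R] [StarRing R] [TrivialStar R]

theorem PosSemidef.dotProduct_mulVec_sq_le {M : Matrix ι ι R} (hM : M.PosSemidef)
    (u v : ι → R) : (u ⬝ᵥ M *ᵥ v) ^ 2 ≤ (u ⬝ᵥ M *ᵥ u) * (v ⬝ᵥ M *ᵥ v) := by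
  have hsymm : v ⬝ᵥ M *ᵥ u = u ⬝ᵥ M *ᵥ v := by
    rw [dotProduct_mulVec, dotProduct_comm, ← mulVec_transpose,
      ← conjTranspose_eq_transpose_of_trivial, hM.isHermitian.eq]
  have hquad (t : R) :
      0 ≤ (v ⬝ᵥ M *ᵥ v) * (t * t) + 2 * (u ⬝ᵥ M *ᵥ v) * t + u ⬝ᵥ M *ᵥ u := by
    have := hM.dotProduct_mulVec_nonneg (u + t • v)
    simp only [star_trivial, mulVec_add, mulVec_smul, add_dotProduct, dotProduct_add,
      smul_dotProduct, dotProduct_smul, hsymm, smul_eq_mul] at this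
    linarith
  have := discrim_le_zero hquad
  rw [discrim] at this
  nlinarith

theorem PosDef.one_le_apply_mul_inv_apply [DecidableEq ι] {M : Matrix ι ι R} (hM : M.PosDef)
    (i : ι) : 1 ≤ M i i * M⁻¹ i i := by
  have h := hM.posSemidef.dotProduct_mulVec_sq_le (Pi.single i 1) (M⁻¹ *ᵥ Pi.single i 1)
  rw [dotProduct_mulVec_inv_mulVec_single hM.isUnit, mulVec_mulVec,
    mul_nonsing_inv _ ((isUnit_iff_isUnit_det M).mp hM.isUnit), one_mulVec] at h
  simpa [mulVec_single_one] using h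

end Matrix

open Matrix

variable {n : ℕ}

def torusSteps (n : ℕ) : Finset (ZMod n × ZMod n) := {(0, 0), (1, 0), (-1, 0), (0, 1), (0, -1)}

theorem card_torusSteps (hn : 3 ≤ n) : #(torusSteps n) = 5 := by
  have : Fact (1 < n) := ⟨by omega⟩
  have h : (-1 : ZMod n) ≠ 1 := @ZMod.neg_one_ne_one n ⟨hn⟩
  simp [torusSteps, Prod.ext_iff, h.symm]

theorem neg_mem_torusSteps {d : ZMod n × ZMod n} (hd : d ∈ torusSteps n) :
    -d ∈ torusSteps n := by
  simp only [torusSteps, mem_insert, mem_singleton] at hd ⊢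
  rcases hd with rfl | rfl | rfl | rfl | rfl <;> simp

theorem lazySRW_apply (x y : ZMod n × ZMod n) :
    lazySRW n x y = 5⁻¹ * #{d ∈ torusSteps n | y = x + d} := by
  rw [lazySRW, one_div]; rfl

theorem lazySRW_apply_self (x : ZMod n × ZMod n) : lazySRW n x x = 5⁻¹ := by
  have h0 : (0 : ZMod n × ZMod n) ∈ torusSteps n := mem_insert_self _ _
  simp only [lazySRW_apply, left_eq_add, filter_eq', if_pos h0, card_singleton]
  norm_num

theorem lazySRW_transpose : (lazySRW n)ᵀ = lazySRW n := by
  ext x y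
  rw [transpose_apply, lazySRW_apply, lazySRW_apply]
  congr 2
  refine card_nbij' Neg.neg Neg.neg ?_ ?_ (fun _ _ => neg_neg _) (fun _ _ => neg_neg _) <;>
  · intro d hd
    simp only [coe_filter, Set.mem_ofPred_eq] at hd ⊢
    exact ⟨neg_mem_torusSteps hd.1, by rw [hd.2]; abel⟩

theorem one_sub_lazySRW'_eq_submatrix :
    1 - lazySRW' n = (1 - lazySRW n).submatrix Subtype.val Subtype.val := by
  ext x y
  simp [lazySRW', one_apply, Subtype.ext_iff]

theorem one_sub_lazySRW'_apply_self (x : {x : ZMod n × ZMod n // x ≠ 0}) :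
    (1 - lazySRW' n) x x = 4 / 5 := by
  norm_num [lazySRW', lazySRW_apply_self]

theorem extend_val_apply_zero (g : {x : ZMod n × ZMod n // x ≠ 0} → ℝ) :
    extend Subtype.val g 0 0 = 0 :=
  extend_apply' _ _ _ fun ⟨z, hz⟩ => z.2 hz

variable [NeZero n]

theorem lazySRW_mulVec (v : ZMod n × ZMod n → ℝ) (x : ZMod n × ZMod n) :
    (lazySRW n *ᵥ v) x = 5⁻¹ * ∑ d ∈ torusSteps n, v (x + d) := by
  simp only [mulVec, dotProduct, lazySRW_apply, card_filter, Nat.cast_sum, mul_assoc, ← mul_sum,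
    sum_mul]
  rw [sum_comm]
  simp

def dirichletEnergy (v : ZMod n × ZMod n → ℝ) : ℝ :=
  ∑ x, ∑ d ∈ torusSteps n, (v x - v (x + d)) ^ 2

theorem dirichletEnergy_nonneg (v : ZMod n × ZMod n → ℝ) : 0 ≤ dirichletEnergy v :=
  sum_nonneg fun _ _ => sum_nonneg fun _ _ => sq_nonneg _

theorem dotProduct_one_sub_lazySRW_mulVec (hn : 3 ≤ n) (v : ZMod n × ZMod n → ℝ) :
    v ⬝ᵥ (1 - lazySRW n) *ᵥ v = dirichletEnergy v / 10 := by
  have hE (d : ZMod n × ZMod n) : ∑ x, (v x - v (x + d)) ^ 2 =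
      2 * ∑ x, v x ^ 2 - 2 * ∑ x, v x * v (x + d) := by
    have hshift : ∑ x, v (x + d) ^ 2 = ∑ x, v x ^ 2 :=
      Equiv.sum_comp (Equiv.addRight d) (fun x => v x ^ 2)
    calc ∑ x, (v x - v (x + d)) ^ 2 = ∑ x, (v x ^ 2 + v (x + d) ^ 2 - 2 * (v x * v (x + d))) :=
          sum_congr rfl fun x _ => by ring
      _ = _ := by rw [sum_sub_distrib, sum_add_distrib, hshift, ← mul_sum]; ring
  have hQ : v ⬝ᵥ (1 - lazySRW n) *ᵥ v =
      ∑ x, v x ^ 2 - 5⁻¹ * ∑ d ∈ torusSteps n, ∑ x, v x * v (x + d) := by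
    rw [sub_mulVec, one_mulVec, dotProduct_sub, sum_comm, mul_sum]
    simp only [dotProduct, lazySRW_mulVec, mul_sum, sq]
    exact congrArg _ (sum_congr rfl fun x _ => sum_congr rfl fun d _ => by ring)
  rw [hQ, dirichletEnergy, sum_comm (s := univ), sum_congr rfl fun d _ => hE d, sum_sub_distrib,
    sum_const, card_torusSteps hn, ← mul_sum]
  ring

theorem dotProduct_one_sub_lazySRW'_mulVec (hn : 3 ≤ n)
    (g : {x : ZMod n × ZMod n // x ≠ 0} → ℝ) :
    g ⬝ᵥ (1 - lazySRW' n) *ᵥ g = dirichletEnergy (extend Subtype.val g 0) / 10 := by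
  rw [one_sub_lazySRW'_eq_submatrix, dotProduct_submatrix_mulVec _ Subtype.val_injective,
    dotProduct_one_sub_lazySRW_mulVec hn]

theorem periodic_of_dirichletEnergy_eq_zero {v : ZMod n × ZMod n → ℝ}
    (h : dirichletEnergy v = 0) {d : ZMod n × ZMod n} (hd : d ∈ torusSteps n) : Periodic v d := by
  intro x
  have hx := (sum_eq_zero_iff_of_nonneg fun _ _ => sum_nonneg fun _ _ => sq_nonneg _).mp h x
    (mem_univ x)
  have := (sum_eq_zero_iff_of_nonneg fun _ _ => sq_nonneg _).mp hx d hd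
  linarith [pow_eq_zero_iff (n := 2) two_ne_zero |>.mp this]

theorem eq_apply_zero_of_dirichletEnergy_eq_zero {v : ZMod n × ZMod n → ℝ}
    (h : dirichletEnergy v = 0) (x : ZMod n × ZMod n) : v x = v 0 := by
  have h₁ := periodic_of_dirichletEnergy_eq_zero h (d := (1, 0)) (by simp [torusSteps])
  have h₂ := periodic_of_dirichletEnergy_eq_zero h (d := (0, 1)) (by simp [torusSteps])
  have hx : x = x.1.val • ((1, 0) : ZMod n × ZMod n) + x.2.val • (0, 1) := by
    ext <;> simp
  rw [hx]
  exact ((h₁.nsmul _).add_period (h₂.nsmul _)).eq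

theorem posDef_one_sub_lazySRW' (hn : 3 ≤ n) : (1 - lazySRW' n).PosDef := by
  refine .of_dotProduct_mulVec_pos ?_ fun g hg => ?_
  · rw [one_sub_lazySRW'_eq_submatrix]
    refine IsHermitian.submatrix ?_ _
    rw [IsHermitian, conjTranspose_eq_transpose_of_trivial, transpose_sub, transpose_one,
      lazySRW_transpose]
  · rw [star_trivial, dotProduct_one_sub_lazySRW'_mulVec hn]
    refine div_pos ((dirichletEnergy_nonneg _).lt_of_ne fun h => hg ?_) (by norm_num)
    ext y
    simpa [Subtype.val_injective.extend_apply, extend_val_apply_zero] using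
      eq_apply_zero_of_dirichletEnergy_eq_zero h.symm y.1

theorem sq_le_dirichletEnergy (hn : 3 ≤ n) {v : ZMod n × ZMod n → ℝ} (h0 : v 0 = 0) :
    8 / 3 * v (1, 0) ^ 2 ≤ dirichletEnergy v := by
  have : Fact (1 < n) := ⟨by omega⟩
  have h1 : (1 : ZMod n) ≠ 0 := one_ne_zero
  set F : ZMod n × ZMod n → ℝ := fun x => ∑ d ∈ torusSteps n, (v x - v (x + d)) ^ 2
  have hF (x : ZMod n × ZMod n) {d₁ d₂ : ZMod n × ZMod n} (h₁ : d₁ ∈ torusSteps n)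
      (h₂ : d₂ ∈ torusSteps n) (h : d₁ ≠ d₂) :
      (v x - v (x + d₁)) ^ 2 + (v x - v (x + d₂)) ^ 2 ≤ F x :=
    add_le_sum (f := fun d => (v x - v (x + d)) ^ 2) (fun _ _ => sq_nonneg _) h₁ h₂ h
  have hsquare : F 0 + F (1, 0) + F (1, 1) + F (0, 1) ≤ dirichletEnergy v := by
    calc F 0 + F (1, 0) + F (1, 1) + F (0, 1) = ∑ x ∈ {0, (1, 0), (1, 1), (0, 1)}, F x := by
          simp [Prod.ext_iff, h1, add_assoc]
      _ ≤ ∑ x, F x := sum_le_sum_of_subset_of_nonneg (subset_univ _)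
          fun _ _ _ => sum_nonneg fun _ _ => sq_nonneg _
  have e₀ := hF 0 (d₁ := (1, 0)) (d₂ := (0, 1)) (by simp [torusSteps]) (by simp [torusSteps])
    (by simp [h1])
  have e₁ := hF (1, 0) (d₁ := (-1, 0)) (d₂ := (0, 1)) (by simp [torusSteps])
    (by simp [torusSteps]) (by simp [h1])
  have e₂ := hF (1, 1) (d₁ := (-1, 0)) (d₂ := (0, -1)) (by simp [torusSteps])
    (by simp [torusSteps]) (by simp [h1])
  have e₃ := hF (0, 1) (d₁ := (1, 0)) (d₂ := (0, -1)) (by simp [torusSteps])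
    (by simp [torusSteps]) (by simp [h1])
  simp only [Prod.mk_add_mk, zero_add, add_zero, add_neg_cancel, Prod.mk_zero_zero, h0]
    at e₀ e₁ e₂ e₃
  nlinarith [sq_nonneg (v (1, 0) - v (1, 1) - (v (1, 1) - v (0, 1))),
    sq_nonneg (v (1, 0) - v (1, 1) - v (0, 1)), sq_nonneg (v (1, 1) - v (0, 1) - v (0, 1))]

theorem dirichletEnergy_extend_inv_mulVec_single (hn : 3 ≤ n)
    (x : {x : ZMod n × ZMod n // x ≠ 0}) :
    dirichletEnergy (extend Subtype.val ((1 - lazySRW' n)⁻¹ *ᵥ Pi.single x 1) 0) =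
      10 * (1 - lazySRW' n)⁻¹ x x := by
  have := dotProduct_one_sub_lazySRW'_mulVec hn ((1 - lazySRW' n)⁻¹ *ᵥ Pi.single x 1)
  rw [dotProduct_mulVec_inv_mulVec_single (posDef_one_sub_lazySRW' hn).isUnit] at this
  linarith

/-- For every `n ≥ 3`, `5/4 ≤ e_{(1,0)}ᵀ (I − P'ₙ)⁻¹ e_{(1,0)} < 5`. -/
theorem resolvent_diagonal_entry_bounds (n : ℕ) [NeZero n] (hn : 3 ≤ n) :
    5 / 4 ≤ resolventEntry n (1, 0) (1, 0) ∧ resolventEntry n (1, 0) (1, 0) < 5 := by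
  have : Fact (1 < n) := ⟨by omega⟩
  have hx : ((1, 0) : ZMod n × ZMod n) ≠ 0 := by simp [Prod.ext_iff]
  set x : {x : ZMod n × ZMod n // x ≠ 0} := ⟨(1, 0), hx⟩
  have hγ : resolventEntry n (1, 0) (1, 0) = (1 - lazySRW' n)⁻¹ x x := by
    simp [resolventEntry, hx, x]
  have hlow := (posDef_one_sub_lazySRW' hn).one_le_apply_mul_inv_apply x
  rw [one_sub_lazySRW'_apply_self] at hlow
  set g := (1 - lazySRW' n)⁻¹ *ᵥ Pi.single x 1
  have hgx : extend Subtype.val g 0 (1, 0) = (1 - lazySRW' n)⁻¹ x x :=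
    (Subtype.val_injective.extend_apply g 0 x).trans (by simp [g])
  have hup := sq_le_dirichletEnergy hn (extend_val_apply_zero g)
  rw [hgx, dirichletEnergy_extend_inv_mulVec_single hn] at hup
  rw [hγ]
  constructor <;> nlinarith
end

section
/- There exist constants c, C > 0 such that for every n ≥ 3, c·n² ≤ e_{(1,0)}ᵀ (I − P'_n)^{-2} e_{(1,0)} ≤ C·n², where e_{(1,0)} is the standard basis vector at index (1,0) ∈ (ℤ/nℤ)² ∖ {(0,0)}. (This expresses that the expected hitting time of the origin from (1,0) under 1/5-lazy simple random walk on the torus is of order n².) -/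
/-- `e_xᵀ (I − P'ₙ)⁻² e_y`, the `(x,y)` entry of the squared resolvent `(I − P'ₙ)⁻²`
(with value `0` in the degenerate cases `x = 0` or `y = 0`). -/
noncomputable def resolventSqEntry (n : ℕ) [NeZero n] (x y : ZMod n × ZMod n) : ℝ :=
  if hx : x ≠ 0 then
    if hy : y ≠ 0 then (((1 - lazySRW' n)⁻¹) ^ 2) ⟨x, hx⟩ ⟨y, hy⟩ else 0
  else 0

namespace SRWaux

open Matrix

variable (n : ℕ) [NeZero n]
set_option linter.unusedSectionVars false

/-- The direction set. -/
def D : Finset (ZMod n × ZMod n) :=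
  {((0 : ZMod n), (0 : ZMod n)), (1, 0), (-1, 0), (0, 1), (0, -1)}

lemma lazySRW_def (x y : ZMod n × ZMod n) :
    lazySRW n x y = (1/5 : ℝ) * (((D n).filter (fun d => y = x + d)).card : ℝ) := rfl

lemma mem_D_iff (z : ZMod n × ZMod n) :
    z ∈ D n ↔ z = 0 ∨ z = (1, 0) ∨ z = (-1, 0) ∨ z = (0, 1) ∨ z = (0, -1) := by
  simp only [D, Finset.mem_insert, Finset.mem_singleton, Prod.mk_zero_zero]

lemma lazySRW_eq (x y : ZMod n × ZMod n) :
    lazySRW n x y = if y - x ∈ D n then (1/5 : ℝ) else 0 := by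
  have h : ((D n).filter (fun d => y = x + d)) = (D n).filter (fun d => d = y - x) := by
    apply Finset.filter_congr
    intro d _
    constructor
    · rintro rfl; ring
    · rintro rfl; ring
  rw [lazySRW_def, h, Finset.filter_eq']
  split_ifs with hm <;> simp

lemma sum_lazySRW_mul (x : ZMod n × ZMod n) (f : ZMod n × ZMod n → ℝ) :
    ∑ y : ZMod n × ZMod n, lazySRW n x y * f y = (1/5 : ℝ) * ∑ d ∈ D n, f (x + d) := by
  have key : ∀ y, lazySRW n x y * f y
      = ∑ d ∈ D n, (if y = x + d then (1/5 : ℝ) * f y else 0) := by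
    intro y
    rw [lazySRW_def, Finset.card_filter]
    push_cast
    rw [mul_assoc, Finset.sum_mul, Finset.mul_sum]
    apply Finset.sum_congr rfl
    intro d _
    split_ifs <;> simp
  simp_rw [key]
  rw [Finset.sum_comm, Finset.mul_sum]
  apply Finset.sum_congr rfl
  intro d _
  rw [Finset.sum_ite_eq' Finset.univ (x + d) (fun y => (1/5 : ℝ) * f y)]
  simp


section nge3
variable (hn : 3 ≤ n)
include hn

lemma one_ne_zero' : (1 : ZMod n) ≠ 0 := by
  have : ((1 : ℕ) : ZMod n) ≠ 0 := by
    rw [Ne, ZMod.natCast_eq_zero_iff]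
    intro h
    have := Nat.le_of_dvd one_pos h
    omega
  simpa using this

lemma two_ne_zero' : (2 : ZMod n) ≠ 0 := by
  have : ((2 : ℕ) : ZMod n) ≠ 0 := by
    rw [Ne, ZMod.natCast_eq_zero_iff]
    intro h
    have := Nat.le_of_dvd two_pos h
    omega
  simpa using this

lemma neg_one_ne_zero' : (-1 : ZMod n) ≠ 0 := by
  simpa [neg_eq_zero] using one_ne_zero' n hn

lemma one_ne_neg_one : (1 : ZMod n) ≠ -1 := by
  intro h
  apply two_ne_zero' n hn
  have h2 : (1 : ZMod n) + 1 = 0 := by nth_rewrite 1 [h]; ring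
  rw [show (2 : ZMod n) = 1 + 1 by norm_num, h2]

lemma card_D : (D n).card = 5 := by
  have h1 := one_ne_zero' n hn
  have h2 := neg_one_ne_zero' n hn
  have h3 := one_ne_neg_one n hn
  rw [D]
  rw [Finset.card_insert_of_notMem, Finset.card_insert_of_notMem,
    Finset.card_insert_of_notMem, Finset.card_insert_of_notMem, Finset.card_singleton]
  all_goals
    simp [Prod.ext_iff, h1, h2, h3, Ne.symm h1, Ne.symm h2, Ne.symm h3]

end nge3

lemma neg_mem_D {z : ZMod n × ZMod n} (hz : z ∈ D n) : -z ∈ D n := by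
  rw [mem_D_iff] at hz ⊢
  rcases hz with h | h | h | h | h <;> subst h <;> simp [Prod.ext_iff] <;> tauto

lemma lazySRW_symm (x y : ZMod n × ZMod n) : lazySRW n x y = lazySRW n y x := by
  rw [lazySRW_eq, lazySRW_eq]
  have : x - y ∈ D n ↔ y - x ∈ D n := by
    constructor
    · intro h; simpa using neg_mem_D n h
    · intro h; simpa using neg_mem_D n h
  simp only [this]


lemma e1_mem_D : ((1 : ZMod n), (0 : ZMod n)) ∈ D n := by rw [mem_D_iff]; tauto
lemma e2_mem_D : ((0 : ZMod n), (1 : ZMod n)) ∈ D n := by rw [mem_D_iff]; tauto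

/-- Connectivity: a set closed under adding directions is everything. -/
lemma reach (W : Set (ZMod n × ZMod n))
    (hW : ∀ x ∈ W, ∀ d ∈ D n, x + d ∈ W) (x₀ : ZMod n × ZMod n) (hx₀ : x₀ ∈ W) :
    ∀ z, z ∈ W := by
  have h1 : ∀ (a : ℕ), ∀ x ∈ W, x + ((a : ZMod n), 0) ∈ W := by
    intro a
    induction a with
    | zero => intro x hx; simpa [Prod.mk_zero_zero] using hx
    | succ k ih =>
      intro x hx
      rw [show (((k+1 : ℕ) : ZMod n), (0 : ZMod n)) = ((k : ZMod n), (0 : ZMod n)) + (1, 0) by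
        rw [Prod.mk_add_mk]; push_cast; simp, ← add_assoc]
      exact hW _ (ih x hx) _ (e1_mem_D n)
  have h2 : ∀ (b : ℕ), ∀ x ∈ W, x + (0, (b : ZMod n)) ∈ W := by
    intro b
    induction b with
    | zero => intro x hx; simpa [Prod.mk_zero_zero] using hx
    | succ k ih =>
      intro x hx
      rw [show ((0 : ZMod n), ((k+1 : ℕ) : ZMod n)) = ((0 : ZMod n), (k : ZMod n)) + (0, 1) by
        rw [Prod.mk_add_mk]; push_cast; simp, ← add_assoc]
      exact hW _ (ih x hx) _ (e2_mem_D n)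
  intro z
  obtain ⟨a, ha⟩ := ZMod.natCast_zmod_surjective (n := n) (z.1 - x₀.1)
  obtain ⟨b, hb⟩ := ZMod.natCast_zmod_surjective (n := n) (z.2 - x₀.2)
  have := h2 b _ (h1 a x₀ hx₀)
  convert this using 1
  rw [Prod.ext_iff]
  constructor
  · simp [ha.symm ▸ (rfl : z.1 - x₀.1 = z.1 - x₀.1)]
    rw [ha]; ring
  · simp
    rw [hb]; ring

/-- Minimum principle. -/
lemma minp (b v : ZMod n × ZMod n → ℝ) (hb : ∀ x, 0 ≤ b x) (h0 : v 0 = 0)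
    (hv : ∀ x, x ≠ 0 → v x = b x + (1/5 : ℝ) * ∑ d ∈ D n, v (x + d)) :
    ∀ x, 0 ≤ v x := by
  obtain ⟨x₀, -, hmin⟩ := Finset.exists_min_image Finset.univ v ⟨0, Finset.mem_univ 0⟩
  simp only [Finset.mem_univ, forall_const] at hmin
  set m := v x₀ with hm
  by_cases hm0 : 0 ≤ m
  · intro x; exact le_trans hm0 (hmin x)
  push_neg at hm0
  exfalso
  -- the set where the min is attained
  set W : Set (ZMod n × ZMod n) := {x | v x = m} with hW
  have hWne : ∀ x ∈ W, x ≠ 0 := by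
    rintro x hx rfl
    rw [hW] at hx
    simp only [Set.mem_setOf_eq] at hx
    rw [h0] at hx
    exact absurd hx.symm (ne_of_lt hm0)
  have hcard : ((D n).card : ℝ) ≤ 5 := by
    have : (D n).card ≤ 5 := by
      rw [D]
      apply le_trans (Finset.card_insert_le _ _)
      apply Nat.succ_le_succ
      apply le_trans (Finset.card_insert_le _ _)
      apply Nat.succ_le_succ
      apply le_trans (Finset.card_insert_le _ _)
      apply Nat.succ_le_succ
      apply le_trans (Finset.card_insert_le _ _)
      apply Nat.succ_le_succ
      simp
    exact_mod_cast this
  have hclosed : ∀ x ∈ W, ∀ d ∈ D n, x + d ∈ W := by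
    intro x hx d hd
    have hxne := hWne x hx
    have hxm : v x = m := hx
    have heq := hv x hxne
    -- each term in the sum is ≥ m
    have hterm : ∀ d' ∈ D n, m ≤ v (x + d') := fun d' _ => hmin _
    have hsumge : (D n).card • m ≤ ∑ d' ∈ D n, v (x + d') := by
      calc ((D n).card) • m = ∑ _d' ∈ D n, m := by rw [Finset.sum_const]
      _ ≤ _ := Finset.sum_le_sum hterm
    -- show the sum is exactly card • m and b x = 0
    have hsumle : ∑ d' ∈ D n, v (x + d') ≤ (D n).card • m := by
      by_contra hlt
      push_neg at hlt
      have hlt' : ((D n).card : ℝ) * m < ∑ d' ∈ D n, v (x + d') := by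
        rw [← nsmul_eq_mul]; exact hlt
      have h5 : 5 * m ≤ ((D n).card : ℝ) * m := by nlinarith [hcard, hm0.le]
      have : m < v x := by
        rw [heq]
        nlinarith [hlt', h5, hb x]
      exact absurd hxm (ne_of_gt this)
    have hsum_eq : ∑ d' ∈ D n, v (x + d') = (D n).card • m := le_antisymm hsumle hsumge
    have : ∀ d' ∈ D n, v (x + d') = m := by
      have := (Finset.sum_eq_sum_iff_of_le (fun d' hd' => hterm d' hd')).1 ?_
      · intro d' hd'; exact (this d' hd').symm
      · rw [hsum_eq, Finset.sum_const]
    exact this d hd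
  have h0W : (0 : ZMod n × ZMod n) ∈ W := reach n W hclosed x₀ rfl 0
  exact (hWne 0 h0W) rfl


/-- Maximum principle for functions harmonic away from `0` and `x₀`. -/
lemma maxp (x₀ : ZMod n × ZMod n) (v : ZMod n × ZMod n → ℝ)
    (h0 : v 0 = 0) (hpos : 0 < v x₀)
    (hv : ∀ y, y ≠ 0 → y ≠ x₀ → v y = (1/5 : ℝ) * ∑ d ∈ D n, v (y + d)) :
    ∀ y, v y ≤ v x₀ := by
  obtain ⟨y₀, -, hmax⟩ := Finset.exists_max_image Finset.univ v ⟨0, Finset.mem_univ 0⟩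
  simp only [Finset.mem_univ, forall_const] at hmax
  set m := v y₀ with hm
  by_cases hmle : m ≤ v x₀
  · intro y; exact le_trans (hmax y) hmle
  push_neg at hmle
  exfalso
  have hmpos : 0 < m := lt_trans hpos hmle
  have hcard : ((D n).card : ℝ) ≤ 5 := by
    have : (D n).card ≤ 5 := by
      rw [D]
      apply le_trans (Finset.card_insert_le _ _) (Nat.succ_le_succ ?_)
      apply le_trans (Finset.card_insert_le _ _) (Nat.succ_le_succ ?_)
      apply le_trans (Finset.card_insert_le _ _) (Nat.succ_le_succ ?_)
      apply le_trans (Finset.card_insert_le _ _) (Nat.succ_le_succ ?_)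
      simp
    exact_mod_cast this
  set W : Set (ZMod n × ZMod n) := {x | v x = m} with hW
  have hWne : ∀ x ∈ W, x ≠ 0 := by
    rintro x hx rfl
    rw [hW] at hx
    simp only [Set.mem_setOf_eq] at hx
    rw [h0] at hx
    exact absurd hx.symm (ne_of_gt hmpos)
  have hWnex : ∀ x ∈ W, x ≠ x₀ := by
    rintro x hx rfl
    exact absurd hx (ne_of_lt hmle)
  have hclosed : ∀ x ∈ W, ∀ d ∈ D n, x + d ∈ W := by
    intro x hx d hd
    have hxm : v x = m := hx
    have heq := hv x (hWne x hx) (hWnex x hx)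
    have hterm : ∀ d' ∈ D n, v (x + d') ≤ m := fun d' _ => hmax _
    have hsumle : ∑ d' ∈ D n, v (x + d') ≤ (D n).card • m := by
      calc ∑ d' ∈ D n, v (x + d') ≤ ∑ _d' ∈ D n, m := Finset.sum_le_sum hterm
      _ = _ := by rw [Finset.sum_const]
    have hsumge : (D n).card • m ≤ ∑ d' ∈ D n, v (x + d') := by
      by_contra hlt
      push_neg at hlt
      rw [nsmul_eq_mul] at hlt
      have h5 : ((D n).card : ℝ) * m ≤ 5 * m := by nlinarith [hcard, hmpos.le]
      have : v x < m := by
        rw [heq]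
        nlinarith [hlt, h5]
      exact absurd hxm (ne_of_lt this)
    have hsum_eq : ∑ d' ∈ D n, v (x + d') = (D n).card • m := le_antisymm hsumle hsumge
    have : ∀ d' ∈ D n, v (x + d') = m := by
      have := (Finset.sum_eq_sum_iff_of_le (fun d' hd' => hterm d' hd')).1 ?_
      · intro d' hd'; exact this d' hd'
      · rw [hsum_eq, Finset.sum_const]
    exact this d hd
  have h0W : (0 : ZMod n × ZMod n) ∈ W := reach n W hclosed y₀ rfl 0
  exact (hWne 0 h0W) rfl


/-- Extension by zero of a function on the nonzero states. -/
def ext (v : {x : ZMod n × ZMod n // x ≠ 0} → ℝ) : ZMod n × ZMod n → ℝ :=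
  fun y => if h : y = 0 then 0 else v ⟨y, h⟩

lemma ext_zero (v : {x : ZMod n × ZMod n // x ≠ 0} → ℝ) : ext n v 0 = 0 := by simp [ext]

lemma ext_apply (v : {x : ZMod n × ZMod n // x ≠ 0} → ℝ) (z : {x : ZMod n × ZMod n // x ≠ 0}) :
    ext n v z.1 = v z := by
  rw [ext, dif_neg z.2]

lemma sum_ext (f : ZMod n × ZMod n → ℝ) (hf : f 0 = 0) :
    ∑ z : {x : ZMod n × ZMod n // x ≠ 0}, f z.1 = ∑ z : ZMod n × ZMod n, f z := by
  rw [← Finset.sum_subtype (Finset.univ.filter (fun x : ZMod n × ZMod n => x ≠ 0))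
    (by simp) f]
  apply Finset.sum_filter_of_ne
  intro x _ hfx
  rintro rfl
  exact hfx hf

lemma mulVec_one_sub (v : {x : ZMod n × ZMod n // x ≠ 0} → ℝ)
    (z : {x : ZMod n × ZMod n // x ≠ 0}) :
    (1 - lazySRW' n).mulVec v z = v z - (1/5 : ℝ) * ∑ d ∈ D n, ext n v (z.1 + d) := by
  have h0 : (1 - lazySRW' n).mulVec v z
      = ∑ w : {x : ZMod n × ZMod n // x ≠ 0},
          ((if z = w then (1:ℝ) else 0) - lazySRW' n z w) * v w := by
    simp [Matrix.mulVec, dotProduct, Matrix.sub_apply, Matrix.one_apply]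
  rw [h0]
  simp only [sub_mul]
  rw [Finset.sum_sub_distrib]
  congr 1
  · simp only [ite_mul, one_mul, zero_mul]
    rw [Finset.sum_ite_eq Finset.univ z v]
    simp
  · have h1 : ∀ w : {x : ZMod n × ZMod n // x ≠ 0},
        lazySRW' n z w * v w = lazySRW n z.1 w.1 * ext n v w.1 := by
      intro w; rw [ext_apply]; rfl
    calc ∑ w : {x : ZMod n × ZMod n // x ≠ 0}, lazySRW' n z w * v w
        = ∑ w : {x : ZMod n × ZMod n // x ≠ 0}, lazySRW n z.1 w.1 * ext n v w.1 := by
          exact Finset.sum_congr rfl (fun w _ => h1 w)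
      _ = ∑ w : ZMod n × ZMod n, lazySRW n z.1 w * ext n v w :=
          sum_ext n (fun w => lazySRW n z.1 w * ext n v w) (by show lazySRW n z.1 0 * ext n v 0 = 0; rw [ext_zero, mul_zero])
      _ = (1/5 : ℝ) * ∑ d ∈ D n, ext n v (z.1 + d) := sum_lazySRW_mul n z.1 (ext n v)

/-- `1 - P'` is invertible. -/
lemma isUnit_one_sub : IsUnit (1 - lazySRW' n) := by
  rw [← Matrix.mulVec_injective_iff_isUnit]
  have : Function.Injective (Matrix.mulVecLin (1 - lazySRW' n)) := by
    rw [← LinearMap.ker_eq_bot, LinearMap.ker_eq_bot']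
    intro v hv
    rw [Matrix.mulVecLin_apply] at hv
    have heq : ∀ x : ZMod n × ZMod n, x ≠ 0 →
        ext n v x = 0 + (1/5 : ℝ) * ∑ d ∈ D n, ext n v (x + d) := by
      intro x hx
      have := congrFun hv ⟨x, hx⟩
      rw [mulVec_one_sub] at this
      simp only [Pi.zero_apply] at this
      rw [zero_add]
      have h2 : ext n v x = v ⟨x, hx⟩ := ext_apply n v ⟨x, hx⟩
      linarith [this, h2]
    have hpos := minp n (fun _ => (0:ℝ)) (ext n v) (fun _ => le_refl 0) (ext_zero n v) heq
    have heq' : ∀ x : ZMod n × ZMod n, x ≠ 0 →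
        (fun y => - ext n v y) x = 0 + (1/5 : ℝ) * ∑ d ∈ D n, (fun y => - ext n v y) (x + d) := by
      intro x hx
      simp only
      rw [Finset.sum_neg_distrib, heq x hx]
      ring
    have hneg := minp n (fun _ => (0:ℝ)) (fun y => - ext n v y)
      (fun _ => le_refl 0) (by show -ext n v 0 = 0; rw [ext_zero]; ring) heq'
    funext z
    have h1 := hpos z.1
    have h2 := hneg z.1
    simp only [neg_nonneg] at h2
    have : ext n v z.1 = 0 := le_antisymm h2 h1
    rw [ext_apply] at this
    simpa using this
  rwa [← Matrix.coe_mulVecLin]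


lemma inv_symm : ((1 - lazySRW' n)⁻¹)ᵀ = (1 - lazySRW' n)⁻¹ := by
  rw [Matrix.transpose_nonsing_inv]
  congr 1
  rw [Matrix.transpose_sub, Matrix.transpose_one]
  congr 1
  ext z w
  rw [Matrix.transpose_apply]
  exact lazySRW_symm n w.1 z.1

lemma card_S : Fintype.card {x : ZMod n × ZMod n // x ≠ 0} = n^2 - 1 := by
  have h1 : Fintype.card {x : ZMod n × ZMod n // x ≠ 0}
      = Fintype.card (ZMod n × ZMod n) - 1 := Set.card_ne_eq _
  rw [h1, Fintype.card_prod, ZMod.card, sq]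


section main
variable (hn : 3 ≤ n)
include hn

lemma D_not_mem_facts :
    (((-1 : ZMod n), (0 : ZMod n)) : ZMod n × ZMod n) ∈ D n ∧
    ((1 : ZMod n), (0 : ZMod n)) ≠ (0 : ZMod n × ZMod n) := by
  constructor
  · rw [mem_D_iff]; tauto
  · intro h
    exact one_ne_zero' n hn (congrArg Prod.fst h)

/-- The function `u = A e_{(1,0)}` (column of the inverse). -/
lemma u_props (hx0 : ((1:ZMod n), (0:ZMod n)) ≠ (0 : ZMod n × ZMod n)) :
    (∀ y, 0 ≤ ext n (fun w => (1 - lazySRW' n)⁻¹ w ⟨(1,0), hx0⟩) y) ∧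
    (∀ y, ext n (fun w => (1 - lazySRW' n)⁻¹ w ⟨(1,0), hx0⟩) y
      ≤ ext n (fun w => (1 - lazySRW' n)⁻¹ w ⟨(1,0), hx0⟩) (1,0)) ∧
    ext n (fun w => (1 - lazySRW' n)⁻¹ w ⟨(1,0), hx0⟩) (1,0) ≤ 5 := by
  set x₀ : {x : ZMod n × ZMod n // x ≠ 0} := ⟨(1,0), hx0⟩ with hx₀def
  set A := (1 - lazySRW' n)⁻¹ with hA
  set u : {x : ZMod n × ZMod n // x ≠ 0} → ℝ := fun w => A w x₀ with hudef
  have hdet : IsUnit (1 - lazySRW' n).det :=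
    (Matrix.isUnit_iff_isUnit_det _).1 (isUnit_one_sub n)
  have hMA : (1 - lazySRW' n) * A = 1 := Matrix.mul_nonsing_inv _ hdet
  have hu : ∀ z, (1 - lazySRW' n).mulVec u z = if z = x₀ then (1:ℝ) else 0 := by
    intro z
    have h1 : (1 - lazySRW' n).mulVec u z = ((1 - lazySRW' n) * A) z x₀ := by
      simp [Matrix.mulVec, dotProduct, Matrix.mul_apply, hudef]
    rw [h1, hMA, Matrix.one_apply]
  have hu_eq : ∀ x : ZMod n × ZMod n, x ≠ 0 →
      ext n u x = (if x = ((1,0) : ZMod n × ZMod n) then (1:ℝ) else 0)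
        + (1/5 : ℝ) * ∑ d ∈ D n, ext n u (x + d) := by
    intro x hx
    have h2 := hu ⟨x, hx⟩
    rw [mulVec_one_sub] at h2
    have h3 : ext n u x = u ⟨x, hx⟩ := ext_apply n u ⟨x, hx⟩
    have h4 : (⟨x, hx⟩ = x₀) ↔ (x = ((1,0) : ZMod n × ZMod n)) := by
      rw [hx₀def, Subtype.ext_iff]
    by_cases h5 : x = ((1,0) : ZMod n × ZMod n)
    · rw [if_pos h5]
      rw [if_pos (h4.2 h5)] at h2
      rw [h3]; linarith
    · rw [if_neg h5]
      rw [if_neg (fun hh => h5 (h4.1 hh))] at h2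
      rw [h3]; linarith
  have hupos : ∀ y, 0 ≤ ext n u y := by
    apply minp n (fun x => if x = ((1,0) : ZMod n × ZMod n) then (1:ℝ) else 0) (ext n u)
    · intro x; split_ifs <;> norm_num
    · exact ext_zero n u
    · exact hu_eq
  have hux1 : (1:ℝ) ≤ ext n u (1,0) := by
    have := hu_eq (1,0) hx0
    rw [if_pos rfl] at this
    have hs : (0:ℝ) ≤ ∑ d ∈ D n, ext n u ((1,0) + d) :=
      Finset.sum_nonneg (fun d _ => hupos _)
    rw [this]; linarith
  have humax : ∀ y, ext n u y ≤ ext n u (1,0) := by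
    apply maxp n ((1,0) : ZMod n × ZMod n) (ext n u) (ext_zero n u) (by linarith)
    intro y hy0 hy1
    have := hu_eq y hy0
    rw [if_neg hy1, zero_add] at this
    exact this
  refine ⟨hupos, humax, ?_⟩
  -- upper bound 5 on u (1,0)
  have hmem : (((-1 : ZMod n), (0 : ZMod n)) : ZMod n × ZMod n) ∈ D n :=
    (D_not_mem_facts n hn).1
  have hzero : ((1,0) : ZMod n × ZMod n) + ((-1 : ZMod n), (0 : ZMod n)) = 0 := by
    rw [Prod.mk_add_mk]
    simp [Prod.ext_iff]
  have hb : ∑ d ∈ D n, ext n u ((1,0) + d)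
      ≤ ∑ d ∈ D n, (if d = (((-1 : ZMod n), (0 : ZMod n)) : ZMod n × ZMod n) then 0
          else ext n u (1,0)) := by
    apply Finset.sum_le_sum
    intro d hd
    by_cases h : d = (((-1 : ZMod n), (0 : ZMod n)) : ZMod n × ZMod n)
    · rw [if_pos h, h, hzero, ext_zero]
    · rw [if_neg h]; exact humax _
  have hb2 : ∑ d ∈ D n, (if d = (((-1 : ZMod n), (0 : ZMod n)) : ZMod n × ZMod n) then (0:ℝ)
      else ext n u (1,0)) = 4 * ext n u (1,0) := by
    have : ∀ d ∈ D n, (if d = (((-1 : ZMod n), (0 : ZMod n)) : ZMod n × ZMod n) then (0:ℝ)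
        else ext n u (1,0))
        = ext n u (1,0) - (if d = (((-1 : ZMod n), (0 : ZMod n)) : ZMod n × ZMod n)
            then ext n u (1,0) else 0) := by
      intro d _; split_ifs <;> ring
    rw [Finset.sum_congr rfl this, Finset.sum_sub_distrib, Finset.sum_const,
      Finset.sum_ite_eq' (D n) _ (fun _ => ext n u (1,0)), if_pos hmem, card_D n hn]
    push_cast
    ring
  have := hu_eq (1,0) hx0
  rw [if_pos rfl] at this
  have h6 : ext n u (1,0) ≤ 1 + (1/5 : ℝ) * (4 * ext n u (1,0)) := by
    rw [this]
    have := le_trans hb (le_of_eq hb2)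
    linarith
  linarith


/-- Properties of `t = A 𝟙` (expected hitting times). -/
lemma t_props :
    (∀ y, 0 ≤ ext n (fun z => ∑ w : {x : ZMod n × ZMod n // x ≠ 0}, (1 - lazySRW' n)⁻¹ z w) y) ∧
    ((n:ℝ)^2 - 1) / 500
      ≤ ext n (fun z => ∑ w : {x : ZMod n × ZMod n // x ≠ 0}, (1 - lazySRW' n)⁻¹ z w) (1,0) ∧
    ext n (fun z => ∑ w : {x : ZMod n × ZMod n // x ≠ 0}, (1 - lazySRW' n)⁻¹ z w) (1,0)
      ≤ 5 * ((n:ℝ)^2 - 1) := by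
  set A := (1 - lazySRW' n)⁻¹ with hA
  set t : {x : ZMod n × ZMod n // x ≠ 0} → ℝ := fun z => ∑ w, A z w with htdef
  have hdet : IsUnit (1 - lazySRW' n).det :=
    (Matrix.isUnit_iff_isUnit_det _).1 (isUnit_one_sub n)
  have hMA : (1 - lazySRW' n) * A = 1 := Matrix.mul_nonsing_inv _ hdet
  have ht : ∀ z, (1 - lazySRW' n).mulVec t z = 1 := by
    intro z
    have h1 : (1 - lazySRW' n).mulVec t z
        = ∑ w, ((1 - lazySRW' n) * A) z w := by
      simp only [Matrix.mulVec, dotProduct, htdef, Matrix.mul_apply, Finset.mul_sum]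
      rw [Finset.sum_comm]
    rw [h1, hMA]
    simp [Matrix.one_apply]
  have ht_eq : ∀ x : ZMod n × ZMod n, x ≠ 0 →
      ext n t x = 1 + (1/5 : ℝ) * ∑ d ∈ D n, ext n t (x + d) := by
    intro x hx
    have h2 := ht ⟨x, hx⟩
    rw [mulVec_one_sub] at h2
    have h3 : ext n t x = t ⟨x, hx⟩ := ext_apply n t ⟨x, hx⟩
    rw [h3]; linarith
  have htpos : ∀ y, 0 ≤ ext n t y := by
    apply minp n (fun _ => (1:ℝ)) (ext n t)
    · intro x; norm_num
    · exact ext_zero n t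
    · intro x hx
      rw [ht_eq x hx]
  -- global sum identity
  have hcard : Fintype.card (ZMod n × ZMod n) = n^2 := by
    rw [Fintype.card_prod, ZMod.card, sq]
  have hsplit : ∀ z : ZMod n × ZMod n,
      ext n t z - (1/5 : ℝ) * ∑ d ∈ D n, ext n t (z + d)
      = if z = 0 then -((1/5 : ℝ) * ∑ d ∈ D n, ext n t d) else 1 := by
    intro z
    by_cases h : z = 0
    · rw [if_pos h, h, ext_zero]
      simp
    · rw [if_neg h, ht_eq z h]; ring
  have htrans : ∀ d : ZMod n × ZMod n,
      ∑ z : ZMod n × ZMod n, ext n t (z + d) = ∑ z : ZMod n × ZMod n, ext n t z := by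
    intro d
    exact Fintype.sum_equiv (Equiv.addRight d) _ _ (fun z => rfl)
  have hsum0 : ∑ z : ZMod n × ZMod n,
      (ext n t z - (1/5 : ℝ) * ∑ d ∈ D n, ext n t (z + d)) = 0 := by
    rw [Finset.sum_sub_distrib]
    rw [← Finset.mul_sum, Finset.sum_comm]
    have : ∑ d ∈ D n, ∑ z : ZMod n × ZMod n, ext n t (z + d)
        = ∑ d ∈ D n, ∑ z : ZMod n × ZMod n, ext n t z := by
      exact Finset.sum_congr rfl (fun d _ => htrans d)
    rw [this, Finset.sum_const, card_D n hn]
    push_cast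
    ring
  have hsum1 : ∑ z : ZMod n × ZMod n,
      (if z = 0 then -((1/5 : ℝ) * ∑ d ∈ D n, ext n t d) else 1)
      = -((1/5 : ℝ) * ∑ d ∈ D n, ext n t d) + ((n:ℝ)^2 - 1) := by
    have h1 : ∀ z : ZMod n × ZMod n,
        (if z = 0 then -((1/5 : ℝ) * ∑ d ∈ D n, ext n t d) else 1)
        = (if z = 0 then -((1/5 : ℝ) * ∑ d ∈ D n, ext n t d) - 1 else 0) + 1 := by
      intro z; split_ifs <;> ring
    rw [Finset.sum_congr rfl (fun z _ => h1 z), Finset.sum_add_distrib,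
      Finset.sum_ite_eq' Finset.univ (0 : ZMod n × ZMod n)
        (fun _ => -((1/5 : ℝ) * ∑ d ∈ D n, ext n t d) - 1)]
    simp only [Finset.mem_univ, if_pos, Finset.sum_const, Finset.card_univ, hcard]
    push_cast
    ring
  have hkey : (1/5 : ℝ) * ∑ d ∈ D n, ext n t d = (n:ℝ)^2 - 1 := by
    have := hsum0
    rw [Finset.sum_congr rfl (fun z _ => hsplit z), hsum1] at this
    linarith
  -- expand the sum over D
  have h1 := one_ne_zero' n hn
  have h2 := neg_one_ne_zero' n hn
  have h3 := one_ne_neg_one n hn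
  have hT4 : ∑ d ∈ D n, ext n t d
      = ext n t (1,0) + ext n t (-1,0) + ext n t (0,1) + ext n t (0,-1) := by
    rw [D]
    rw [Finset.sum_insert (by
      simp [Prod.ext_iff, h1, h2, h3, Ne.symm h1, Ne.symm h2, Ne.symm h3]),
      Finset.sum_insert (by
      simp [Prod.ext_iff, h1, h2, h3, Ne.symm h1, Ne.symm h2, Ne.symm h3]),
      Finset.sum_insert (by
      simp [Prod.ext_iff, h1, h2, h3, Ne.symm h1, Ne.symm h2, Ne.symm h3]),
      Finset.sum_insert (by
      simp [Prod.ext_iff, h1, h2, h3, Ne.symm h1, Ne.symm h2, Ne.symm h3]),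
      Finset.sum_singleton]
    have h0 : ext n t ((0 : ZMod n), (0 : ZMod n)) = 0 := by
      rw [Prod.mk_zero_zero]; exact ext_zero n t
    rw [h0]
    ring
  -- one-step comparison
  have hstep : ∀ z d : ZMod n × ZMod n, z ≠ 0 → d ∈ D n →
      (1/5 : ℝ) * ext n t (z + d) ≤ ext n t z := by
    intro z d hz hd
    have h5 := ht_eq z hz
    have h6 : ext n t (z + d) ≤ ∑ d' ∈ D n, ext n t (z + d') :=
      Finset.single_le_sum (fun d' _ => htpos _) hd
    rw [h5]
    linarith
  refine ⟨htpos, ?_, ?_⟩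
  · -- lower bound
    have hmem1 : (((0:ZMod n),(1:ZMod n)) : ZMod n × ZMod n) ∈ D n := by
      rw [mem_D_iff]; exact Or.inr (Or.inr (Or.inr (Or.inl rfl)))
    have hmem2 : (((-1:ZMod n),(0:ZMod n)) : ZMod n × ZMod n) ∈ D n := by
      rw [mem_D_iff]; exact Or.inr (Or.inr (Or.inl rfl))
    have hmem3 : (((0:ZMod n),(-1:ZMod n)) : ZMod n × ZMod n) ∈ D n := by
      rw [mem_D_iff]; exact Or.inr (Or.inr (Or.inr (Or.inr rfl)))
    have hne_a1 : (((1:ZMod n),(0:ZMod n)) : ZMod n × ZMod n) ≠ 0 :=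
      fun h => h1 (congrArg Prod.fst h)
    have hne_a2 : (((1:ZMod n),(1:ZMod n)) : ZMod n × ZMod n) ≠ 0 :=
      fun h => h1 (congrArg Prod.fst h)
    have hne_a3 : (((0:ZMod n),(1:ZMod n)) : ZMod n × ZMod n) ≠ 0 :=
      fun h => h1 (congrArg Prod.snd h)
    have hne_a4 : (((-1:ZMod n),(1:ZMod n)) : ZMod n × ZMod n) ≠ 0 :=
      fun h => h2 (congrArg Prod.fst h)
    have hne_a6 : (((1:ZMod n),(-1:ZMod n)) : ZMod n × ZMod n) ≠ 0 :=
      fun h => h1 (congrArg Prod.fst h)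
    have hS1 := hstep (1,0) (0,1) hne_a1 hmem1
    rw [show ((1,0) : ZMod n × ZMod n) + (0,1) = (1,1) by
      rw [Prod.mk_add_mk]; norm_num] at hS1
    have hS2 := hstep (1,1) (-1,0) hne_a2 hmem2
    rw [show ((1,1) : ZMod n × ZMod n) + (-1,0) = (0,1) by
      rw [Prod.mk_add_mk]; norm_num] at hS2
    have hS3 := hstep (0,1) (-1,0) hne_a3 hmem2
    rw [show ((0,1) : ZMod n × ZMod n) + (-1,0) = (-1,1) by
      rw [Prod.mk_add_mk]; norm_num] at hS3
    have hS4 := hstep (-1,1) (0,-1) hne_a4 hmem3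
    rw [show ((-1,1) : ZMod n × ZMod n) + (0,-1) = (-1,0) by
      rw [Prod.mk_add_mk]; norm_num] at hS4
    have hS5 := hstep (1,0) (0,-1) hne_a1 hmem3
    rw [show ((1,0) : ZMod n × ZMod n) + (0,-1) = (1,-1) by
      rw [Prod.mk_add_mk]; norm_num] at hS5
    have hS6 := hstep (1,-1) (-1,0) hne_a6 hmem2
    rw [show ((1,-1) : ZMod n × ZMod n) + (-1,0) = (0,-1) by
      rw [Prod.mk_add_mk]; norm_num] at hS6
    have hsum4 : ext n t (1,0) + ext n t (-1,0) + ext n t (0,1) + ext n t (0,-1)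
        = 5 * ((n:ℝ)^2 - 1) := by
      have := hkey
      rw [hT4] at this
      linarith
    have hp1 := htpos (((1:ZMod n),(0:ZMod n)) : ZMod n × ZMod n)
    have hp2 := htpos (((1:ZMod n),(1:ZMod n)) : ZMod n × ZMod n)
    have hp3 := htpos (((0:ZMod n),(1:ZMod n)) : ZMod n × ZMod n)
    have hp4 := htpos (((-1:ZMod n),(1:ZMod n)) : ZMod n × ZMod n)
    have hp6 := htpos (((1:ZMod n),(-1:ZMod n)) : ZMod n × ZMod n)
    linarith
  · -- upper bound
    have hothers : 0 ≤ ext n t (-1,0) + ext n t (0,1) + ext n t (0,-1) := by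
      have := htpos ((-1,0) : ZMod n × ZMod n)
      have := htpos ((0,1) : ZMod n × ZMod n)
      have := htpos ((0,-1) : ZMod n × ZMod n)
      linarith
    have := hkey
    rw [hT4] at this
    linarith


lemma key (hx0 : ((1:ZMod n), (0:ZMod n)) ≠ (0 : ZMod n × ZMod n)) :
    1/1000000 * (n:ℝ)^2 ≤ (((1 - lazySRW' n)⁻¹)^2) ⟨(1,0), hx0⟩ ⟨(1,0), hx0⟩ ∧
    (((1 - lazySRW' n)⁻¹)^2) ⟨(1,0), hx0⟩ ⟨(1,0), hx0⟩ ≤ 25 * (n:ℝ)^2 := by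
  set A := (1 - lazySRW' n)⁻¹ with hA
  set x₀ : {x : ZMod n × ZMod n // x ≠ 0} := ⟨(1,0), hx0⟩ with hx₀def
  obtain ⟨hupos, humax, hu5⟩ := u_props n hn hx0
  obtain ⟨htpos, htlow, hthigh⟩ := t_props n hn
  have hAsym : ∀ z w, A z w = A w z := by
    intro z w
    have h := congrFun (congrFun (inv_symm n) z) w
    rw [Matrix.transpose_apply] at h
    exact h.symm
  have hsq : (A^2) x₀ x₀ = ∑ w : {x : ZMod n × ZMod n // x ≠ 0}, (A w x₀)^2 := by
    rw [pow_two, Matrix.mul_apply]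
    apply Finset.sum_congr rfl
    intro w _
    rw [hAsym x₀ w, sq]
  have hu_ext : ∀ w : {x : ZMod n × ZMod n // x ≠ 0},
      ext n (fun w' => A w' x₀) w.1 = A w x₀ := fun w => ext_apply n _ w
  have hT : ∑ w : {x : ZMod n × ZMod n // x ≠ 0}, A w x₀
      = ext n (fun z => ∑ w : {x : ZMod n × ZMod n // x ≠ 0}, A z w) (1,0) := by
    have h1 : ext n (fun z => ∑ w : {x : ZMod n × ZMod n // x ≠ 0}, A z w) (1,0)
        = ∑ w : {x : ZMod n × ZMod n // x ≠ 0}, A x₀ w :=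
      ext_apply n (fun z => ∑ w : {x : ZMod n × ZMod n // x ≠ 0}, A z w) x₀
    rw [h1]
    exact Finset.sum_congr rfl (fun w _ => hAsym w x₀)
  set T := ext n (fun z => ∑ w : {x : ZMod n × ZMod n // x ≠ 0}, A z w) (1,0) with hTdef
  have hn' : (3:ℝ) ≤ (n:ℝ) := by exact_mod_cast hn
  have hn2 : (9:ℝ) ≤ (n:ℝ)^2 := by nlinarith
  have hNpos : (0:ℝ) < (n:ℝ)^2 - 1 := by nlinarith
  constructor
  · -- lower bound
    have hcs := sq_sum_le_card_mul_sum_sq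
      (s := (Finset.univ : Finset {x : ZMod n × ZMod n // x ≠ 0}))
      (f := fun w => A w x₀)
    have hcard : ((Finset.univ : Finset {x : ZMod n × ZMod n // x ≠ 0}).card : ℝ)
        = (n:ℝ)^2 - 1 := by
      rw [Finset.card_univ, card_S]
      have h9 : 1 ≤ n^2 := by nlinarith
      push_cast [Nat.cast_sub h9]
      ring
    rw [hcard, hT] at hcs
    have hT2 : ((n:ℝ)^2-1)/500 ≤ T := htlow
    have h1 : ((n:ℝ)^2-1) * (((n:ℝ)^2-1)/250000)
        ≤ ((n:ℝ)^2-1) * ∑ w : {x : ZMod n × ZMod n // x ≠ 0}, (A w x₀)^2 := by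
      nlinarith [hcs, hT2, hNpos]
    have h2 : ((n:ℝ)^2-1)/250000
        ≤ ∑ w : {x : ZMod n × ZMod n // x ≠ 0}, (A w x₀)^2 :=
      (mul_le_mul_iff_right₀ hNpos).1 h1
    rw [hsq]
    nlinarith [h2, hn2]
  · -- upper bound
    have hone : ∀ w : {x : ZMod n × ZMod n // x ≠ 0}, (A w x₀)^2 ≤ 5 * (A w x₀) := by
      intro w
      have h0 := hupos w.1
      have h1 := humax w.1
      rw [hu_ext] at h0 h1
      nlinarith [hu5]
    have hsumle : ∑ w : {x : ZMod n × ZMod n // x ≠ 0}, (A w x₀)^2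
        ≤ 5 * ∑ w : {x : ZMod n × ZMod n // x ≠ 0}, A w x₀ := by
      rw [Finset.mul_sum]
      exact Finset.sum_le_sum (fun w _ => hone w)
    rw [hsq]
    rw [hT] at hsumle
    nlinarith [hthigh, hsumle, hn2]

end main

end SRWaux


/-- There are constants `c, C > 0` such that for every `n ≥ 3`,
`c n² ≤ e_{(1,0)}ᵀ (I − P'ₙ)⁻² e_{(1,0)} ≤ C n²`: the expected hitting time of the origin
from `(1,0)` under `1/5`-lazy simple random walk on the torus is of order `n²`. -/
theorem resolvent_squared_entry_order_n_sq :
    ∃ c C : ℝ, 0 < c ∧ 0 < C ∧ ∀ (n : ℕ) [NeZero n], 3 ≤ n →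
      c * (n : ℝ) ^ 2 ≤ resolventSqEntry n (1, 0) (1, 0) ∧
      resolventSqEntry n (1, 0) (1, 0) ≤ C * (n : ℝ) ^ 2 := by
  refine ⟨1/1000000, 25, by norm_num, by norm_num, ?_⟩
  intro n _ hn
  have hx0 : ((1:ZMod n), (0:ZMod n)) ≠ (0 : ZMod n × ZMod n) :=
    (SRWaux.D_not_mem_facts n hn).2
  have hk := SRWaux.key n hn hx0
  have hres : resolventSqEntry n (1, 0) (1, 0)
      = (((1 - lazySRW' n)⁻¹)^2) ⟨(1,0), hx0⟩ ⟨(1,0), hx0⟩ := by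
    rw [resolventSqEntry, dif_pos hx0, dif_pos hx0]
  rw [hres]
  exact hk
end

section
/- Let f(ε) = (1+ε)·log(1+ε) − ε for ε > −1. For every real t > 0 and every 0 < ε < 1, e^{−t} · Σ_{k ∈ ℕ, k ≤ (1−ε)t} t^k/k! ≤ exp(−f(−ε)·t). -/
/-!
Chernoff's bound for the lower tail of a Poisson law. Put `q = 1 - ε`. For `k ≤ q t` and `q ≤ 1`
we have `q ^ (k - q t) ≥ 1`, so `t ^ k ≤ q ^ (-q t) (q t) ^ k`; summing over all `k` bounds the
truncated exponential series by `q ^ (-q t) e ^ (q t)`, and `e ^ (-t) q ^ (-q t) e ^ (q t)` is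
exactly `exp (-f(q - 1) t)`.
-/

/-- `f(ε) = (1+ε)·log(1+ε) − ε`. -/
noncomputable def chernoffRate (ε : ℝ) : ℝ := (1 + ε) * Real.log (1 + ε) - ε

open Real

lemma pow_le_rpow_neg_mul_mul_pow {q x : ℝ} (hq0 : 0 < q) (hq1 : q ≤ 1) (hx : 0 ≤ x) {k : ℕ}
    (hk : (k : ℝ) ≤ q * x) : x ^ k ≤ q ^ (-(q * x)) * (q * x) ^ k := by
  calc x ^ k = 1 * x ^ k := (one_mul _).symm
    _ ≤ q ^ ((k : ℝ) - q * x) * x ^ k := by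
        gcongr
        exact one_le_rpow_of_pos_of_le_one_of_nonpos hq0 hq1 (by linarith)
    _ = q ^ (-(q * x)) * (q * x) ^ k := by
        rw [sub_eq_neg_add, rpow_add hq0, rpow_natCast, mul_pow]
        ring

lemma tsum_ite_pow_div_factorial_le {q x : ℝ} (hq0 : 0 < q) (hq1 : q ≤ 1) (hx : 0 ≤ x) :
    (∑' k : ℕ, if (k : ℝ) ≤ q * x then x ^ k / (k.factorial : ℝ) else 0)
      ≤ q ^ (-(q * x)) * exp (q * x) := by
  have hdom : ∀ k : ℕ, (if (k : ℝ) ≤ q * x then x ^ k / (k.factorial : ℝ) else 0)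
      ≤ q ^ (-(q * x)) * ((q * x) ^ k / (k.factorial : ℝ)) := by
    intro k
    split_ifs with hk
    · rw [← mul_div_assoc]
      gcongr
      exact pow_le_rpow_neg_mul_mul_pow hq0 hq1 hx hk
    · positivity
  have hexp : HasSum (fun k : ℕ => q ^ (-(q * x)) * ((q * x) ^ k / (k.factorial : ℝ)))
      (q ^ (-(q * x)) * exp (q * x)) := by
    rw [exp_eq_exp_ℝ]
    exact (NormedSpace.expSeries_div_hasSum_exp (q * x)).mul_left _
  have hsum : Summable fun k : ℕ => if (k : ℝ) ≤ q * x then x ^ k / (k.factorial : ℝ) else 0 :=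
    hexp.summable.of_nonneg_of_le (fun k => by split_ifs <;> positivity) hdom
  exact hasSum_le hdom hsum.hasSum hexp

lemma exp_neg_mul_rpow_neg_mul_exp {q : ℝ} (hq0 : 0 < q) (t : ℝ) :
    exp (-t) * (q ^ (-(q * t)) * exp (q * t)) = exp (-(chernoffRate (q - 1) * t)) := by
  rw [rpow_def_of_pos hq0, ← exp_add, ← exp_add, chernoffRate, add_sub_cancel]
  ring_nf

/-- Lower-tail concentration of the Poisson weights: for `t > 0` and `0 < ε < 1`,
`e^{−t} Σ_{k ≤ (1−ε)t} t^k/k! ≤ exp(−f(−ε) t)`. -/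
theorem heat_kernel_lower_tail (t : ℝ) (ht : 0 < t) (ε : ℝ) (hε0 : 0 < ε) (hε1 : ε < 1) :
    Real.exp (-t) * (∑' k : ℕ, if (k : ℝ) ≤ (1 - ε) * t then t ^ k / (Nat.factorial k : ℝ) else 0)
      ≤ Real.exp (-(chernoffRate (-ε) * t)) := by
  have hq0 : 0 < 1 - ε := by linarith
  calc exp (-t) * (∑' k : ℕ, if (k : ℝ) ≤ (1 - ε) * t then t ^ k / (k.factorial : ℝ) else 0)
      ≤ exp (-t) * ((1 - ε) ^ (-((1 - ε) * t)) * exp ((1 - ε) * t)) := by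
        gcongr
        exact tsum_ite_pow_div_factorial_le hq0 (by linarith) ht.le
    _ = exp (-(chernoffRate (-ε) * t)) := by
        rw [exp_neg_mul_rpow_neg_mul_exp hq0, sub_sub_cancel_left]
end
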